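/- arXiv:1408.5873 — 2 statements merged into one kernel-verified Lean document; each statement's English description precedes it below -/
import Mathlib

section
/- For every finite simple graph G there exist infinitely many finite sets S of rational primes such that G is representable with S, i.e. the set of finite sets S of primes for which G is isomorphic to 𝒢_S(A) for some finite subset A of ℤ_S is infinite. -/
open SimpleGraph

/-- `q` is an `S`-integer: every prime dividing its reduced denominator lies in `S`. -/
def SInteger (S : Finset ℕ) (q : ℚ) : Prop :=
  ∀ p : ℕ, p.Prime → p ∣ q.den → p ∈ S

/-- `q` is an `S`-unit: `q ≠ 0` and every prime dividing its reduced numerator or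
reduced denominator lies in `S`. -/
def SUnitQ (S : Finset ℕ) (q : ℚ) : Prop :=
  q ≠ 0 ∧ (∀ p : ℕ, p.Prime → p ∣ q.den → p ∈ S) ∧
    (∀ p : ℕ, p.Prime → p ∣ q.num.natAbs → p ∈ S)

/-- The graph `𝒢_S(A)`: vertices are the elements of `A`, with an edge between distinct
`a, b` iff `a - b` is an `S`-unit. -/
def unitGraph (S : Finset ℕ) (A : Finset ℚ) : SimpleGraph A :=
  SimpleGraph.fromRel (fun a b => SUnitQ S ((a : ℚ) - (b : ℚ)))

/-- `A` is a finite set of `S`-integers whose graph `𝒢_S(A)` is isomorphic to `G`. -/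
def Represents (S : Finset ℕ) {V : Type} (G : SimpleGraph V) (A : Finset ℚ) : Prop :=
  (∀ a ∈ A, SInteger S a) ∧ Nonempty (G ≃g unitGraph S A)

/-- `G` is representable with `S`. -/
def Representable (S : Finset ℕ) {V : Type} (G : SimpleGraph V) : Prop :=
  ∃ A : Finset ℚ, Represents S G A

/-- `A` and `A'` are `S`-equivalent: `A' = u • A + b` for an `S`-unit `u` and `S`-integer `b`. -/
def SEquiv (S : Finset ℕ) (A A' : Finset ℚ) : Prop :=
  ∃ u b : ℚ, SUnitQ S u ∧ SInteger S b ∧ A' = A.image (fun a => u * a + b)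

/-- `G` is infinitely representable with `S`: there are infinitely many pairwise
non-`S`-equivalent finite subsets of `ℤ_S` representing `G`. -/
def InfinitelyRepresentable (S : Finset ℕ) {V : Type} (G : SimpleGraph V) : Prop :=
  ∃ 𝒜 : Set (Finset ℚ), 𝒜.Infinite ∧ (∀ A ∈ 𝒜, Represents S G A) ∧
    𝒜.Pairwise fun A A' => ¬ SEquiv S A A'

/-- Only finitely many `S`-equivalence classes of finite subsets of `ℤ_S` represent `G`:
any pairwise non-`S`-equivalent family of representing subsets is finite. -/
def FinitelyManyClasses (S : Finset ℕ) {V : Type} (G : SimpleGraph V) : Prop :=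
  ∀ 𝒜 : Set (Finset ℚ), (∀ A ∈ 𝒜, Represents S G A) →
    (𝒜.Pairwise fun A A' => ¬ SEquiv S A A') → 𝒜.Finite

/-- The triangle graph `G^△`: vertices are the edges of `G`, two distinct edges being
adjacent iff `G` contains a triangle having both as edges. -/
def triangleGraph {V : Type} (G : SimpleGraph V) : SimpleGraph G.edgeSet :=
  SimpleGraph.fromRel fun e₁ e₂ => ∃ x y z : V, G.Adj x y ∧ G.Adj y z ∧ G.Adj x z ∧
    (e₁ : Sym2 V) = s(x, y) ∧ (e₂ : Sym2 V) = s(y, z)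

/-- An ordered `k`-term subset of `ℤ_S`: a tuple of pairwise distinct `S`-integers. -/
def OrderedTuple (S : Finset ℕ) {k : ℕ} (a : Fin k → ℚ) : Prop :=
  Function.Injective a ∧ ∀ i, SInteger S (a i)

/-- `S`-equivalence of ordered tuples. -/
def TupleSEquiv (S : Finset ℕ) {k : ℕ} (a a' : Fin k → ℚ) : Prop :=
  ∃ u b : ℚ, SUnitQ S u ∧ SInteger S b ∧ ∀ i, a' i = u * a i + b

/-- The graph `𝒢_S(A)` of an ordered tuple `A = (a 0, …, a (k-1))`. -/
def tupleGraph (S : Finset ℕ) {k : ℕ} (a : Fin k → ℚ) : SimpleGraph (Fin k) :=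
  SimpleGraph.fromRel fun i j => SUnitQ S (a i - a j)


section AuxStatement0

private lemma aux_primesAbove_infinite (n : ℕ) : {p : ℕ | p.Prime ∧ n < p}.Infinite := by
  have h : {p : ℕ | p.Prime ∧ n < p} = {p | p.Prime} \ {p | p ≤ n} := by
    ext p; simp [Set.mem_setOf_eq, not_le]
  rw [h]; exact Nat.infinite_setOf_prime.diff (Set.finite_le_nat n)

private lemma aux_prime_not_dvd_prod {I : Type} [Fintype I] [DecidableEq I]
    (q : I → ℕ) (hq : ∀ ι, (q ι).Prime) (hqinj : Function.Injective q) (ι : I) :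
    ¬ q ι ∣ ∏ l ∈ Finset.univ.erase ι, q l := by
  intro h
  obtain ⟨κ, hκ, hdvd⟩ := (hq ι).prime.exists_mem_finset_dvd h
  rw [Nat.prime_dvd_prime_iff_eq (hq ι) (hq κ)] at hdvd
  exact (Finset.mem_erase.1 hκ).1 (hqinj hdvd).symm

private lemma aux_dvd_sum {I : Type} [Fintype I] [DecidableEq I]
    (q : I → ℕ) (c : I → ℤ) (ι : I) (h0 : c ι = 0) :
    (q ι : ℤ) ∣ ∑ κ, c κ * ((∏ l ∈ Finset.univ.erase κ, q l : ℕ) : ℤ) := by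
  refine Finset.dvd_sum fun κ _ => ?_
  by_cases h : κ = ι
  · subst h; rw [h0]; simp
  · refine Dvd.dvd.mul_left ?_ _
    exact_mod_cast Int.natCast_dvd_natCast.2
      (Finset.dvd_prod_of_mem q (Finset.mem_erase.2 ⟨fun he => h he.symm, Finset.mem_univ ι⟩))

private lemma aux_not_dvd_sum {I : Type} [Fintype I] [DecidableEq I]
    (q : I → ℕ) (hq : ∀ ι, (q ι).Prime) (hqinj : Function.Injective q)
    (c : I → ℤ) (ι : I) (hι : ¬ (q ι : ℤ) ∣ c ι) :
    ¬ (q ι : ℤ) ∣ ∑ κ, c κ * ((∏ l ∈ Finset.univ.erase κ, q l : ℕ) : ℤ) := by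
  intro hdvd
  have hrest : (q ι : ℤ) ∣ ∑ κ ∈ Finset.univ.erase ι,
      c κ * ((∏ l ∈ Finset.univ.erase κ, q l : ℕ) : ℤ) := by
    refine Finset.dvd_sum fun κ hκ => Dvd.dvd.mul_left ?_ _
    exact_mod_cast Int.natCast_dvd_natCast.2
      (Finset.dvd_prod_of_mem q
        (Finset.mem_erase.2 ⟨fun he => (Finset.mem_erase.1 hκ).1 he.symm, Finset.mem_univ ι⟩))
  rw [← Finset.sum_erase_add Finset.univ _ (Finset.mem_univ ι)] at hdvd
  have hterm : (q ι : ℤ) ∣ c ι * ((∏ l ∈ Finset.univ.erase ι, q l : ℕ) : ℤ) :=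
    (dvd_add_right hrest).1 hdvd
  have hq' : Prime ((q ι : ℕ) : ℤ) := Int.prime_iff_natAbs_prime.2 (by simpa using hq ι)
  rcases hq'.2.2 _ _ hterm with h | h
  · exact hι h
  · exact aux_prime_not_dvd_prod q hq hqinj ι (Int.natCast_dvd_natCast.1 h)

private lemma aux_exists_S0 {V : Type} [Fintype V] (G : SimpleGraph V) :
    ∃ S0 T : Finset ℕ, (∀ p ∈ S0, p.Prime) ∧ (∀ t ∈ T, t ∉ S0) ∧
      ∀ S : Finset ℕ, S0 ⊆ S → (∀ t ∈ T, t ∉ S) → Representable S G := by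
  classical
  set n := Fintype.card V with hn
  let eV := Fintype.equivFin V
  let idx : V → ℕ := fun v => (eV v : ℕ)
  have idx_lt : ∀ v, idx v < n := fun v => (eV v).2
  have idx_inj : Function.Injective idx := fun a b h => eV.injective (Fin.ext h)
  let I := Option (V × V)
  let r : I → V → ℕ := fun ι k =>
    match ι with
    | none => idx k
    | some p => if (idx p.1 < idx p.2 ∧ ¬ G.Adj p.1 p.2) ∧ k = p.2 then idx p.1 else idx k
  have r_lt : ∀ ι k, r ι k < n := by
    intro ι k
    match ι with
    | none => exact idx_lt k
    | some p =>
      show (if (idx p.1 < idx p.2 ∧ ¬ G.Adj p.1 p.2) ∧ k = p.2 then idx p.1 else idx k) < n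
      split <;> exact idx_lt _
  have r_none_ne : ∀ i j : V, i ≠ j → r none i ≠ r none j := fun i j h hh => h (idx_inj hh)
  have r_some : ∀ (p : V × V) (i j : V), i ≠ j → r (some p) i = r (some p) j → ¬ G.Adj i j := by
    intro p i j hij h
    have h' : (if (idx p.1 < idx p.2 ∧ ¬ G.Adj p.1 p.2) ∧ i = p.2 then idx p.1 else idx i)
        = (if (idx p.1 < idx p.2 ∧ ¬ G.Adj p.1 p.2) ∧ j = p.2 then idx p.1 else idx j) := h
    clear h
    split_ifs at h' with h1 h2 h2
    · exact absurd (h1.2.trans h2.2.symm) hij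
    · intro ha
      apply h1.1.2
      have e1 : p.1 = j := idx_inj h'
      have e2 : p.2 = i := h1.2.symm
      rw [e1, e2]; exact ha.symm
    · intro ha
      apply h2.1.2
      have e1 : i = p.1 := idx_inj h'
      have e2 : j = p.2 := h2.2
      rw [← e1, ← e2]; exact ha
    · exact absurd (idx_inj h') hij
  have r_pair : ∀ i j : V, idx i < idx j → ¬ G.Adj i j →
      r (some (i, j)) i = r (some (i, j)) j := by
    intro i j hlt hna
    have hij : i ≠ j := fun h => lt_irrefl _ (h ▸ hlt)
    show (if (idx i < idx j ∧ ¬ G.Adj i j) ∧ i = j then idx i else idx i)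
        = (if (idx i < idx j ∧ ¬ G.Adj i j) ∧ j = j then idx i else idx j)
    rw [if_neg (fun h => hij h.2), if_pos ⟨⟨hlt, hna⟩, rfl⟩]
  let eI := Fintype.equivFin I
  let q : I → ℕ := fun ι => ((aux_primesAbove_infinite n).natEmbedding _ (eI ι)).1
  have hq_mem : ∀ ι, (q ι).Prime ∧ n < q ι :=
    fun ι => ((aux_primesAbove_infinite n).natEmbedding _ (eI ι)).2
  have hq : ∀ ι, (q ι).Prime := fun ι => (hq_mem ι).1
  have hqn : ∀ ι, n < q ι := fun ι => (hq_mem ι).2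
  have hqinj : Function.Injective q := by
    intro a b h
    exact eI.injective (Fin.ext (((aux_primesAbove_infinite n).natEmbedding _).injective (Subtype.ext h)))
  let M : I → ℕ := fun ι => ∏ l ∈ Finset.univ.erase ι, q l
  let f : V → ℕ := fun k => ∑ ι, r ι k * M ι
  have hfk : ∀ k, (f k : ℤ) = ∑ ι, (r ι k : ℤ) * (M ι : ℤ) := by
    intro k
    show ((∑ ι, r ι k * M ι : ℕ) : ℤ) = _
    push_cast
    rfl
  have hsum : ∀ i j : V, (f i : ℤ) - (f j : ℤ)
      = ∑ ι, ((r ι i : ℤ) - (r ι j : ℤ)) * (M ι : ℤ) := by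
    intro i j
    rw [hfk, hfk, ← Finset.sum_sub_distrib]
    exact Finset.sum_congr rfl fun ι _ => (sub_mul _ _ _).symm
  have not_dvd : ∀ (ι : I) (i j : V), r ι i ≠ r ι j →
      ¬ (q ι : ℤ) ∣ ((f i : ℤ) - (f j : ℤ)) := by
    intro ι i j hne
    rw [hsum]
    refine aux_not_dvd_sum q hq hqinj _ ι ?_
    intro hd
    have hzero : ((r ι i : ℤ) - (r ι j : ℤ)) = 0 := by
      refine Int.eq_zero_of_abs_lt_dvd hd ?_
      have h1 : (r ι i : ℤ) < n := by exact_mod_cast r_lt ι i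
      have h2 : (r ι j : ℤ) < n := by exact_mod_cast r_lt ι j
      have h3 : (0 : ℤ) ≤ (r ι i : ℤ) := Int.natCast_nonneg _
      have h4 : (0 : ℤ) ≤ (r ι j : ℤ) := Int.natCast_nonneg _
      have h5 : (n : ℤ) < (q ι : ℤ) := by exact_mod_cast hqn ι
      rw [abs_sub_lt_iff]
      constructor <;> linarith
    exact hne (by exact_mod_cast sub_eq_zero.1 hzero)
  have dvd_req : ∀ (ι : I) (i j : V), r ι i = r ι j →
      (q ι : ℤ) ∣ ((f i : ℤ) - (f j : ℤ)) := by
    intro ι i j heq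
    rw [hsum]
    refine aux_dvd_sum q _ ι ?_
    rw [heq]; ring
  have f_inj : Function.Injective f := by
    intro i j h
    by_contra hne
    exact not_dvd none i j (r_none_ne i j hne) (by rw [h]; simp)
  let N : ℕ := ∑ ι, n * M ι
  have f_le : ∀ k, f k ≤ N :=
    fun k => Finset.sum_le_sum fun ι _ => Nat.mul_le_mul_right _ (le_of_lt (r_lt ι k))
  have edge_r_ne : ∀ i j : V, G.Adj i j → ∀ ι, r ι i ≠ r ι j := by
    intro i j hadj ι
    match ι with
    | none => exact r_none_ne i j hadj.ne
    | some p => exact fun h => r_some p i j hadj.ne h hadj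
  let S0 : Finset ℕ := (Finset.range (N + 1)).filter fun p => p.Prime ∧ ∀ ι, p ≠ q ι
  let T : Finset ℕ := Finset.image q Finset.univ
  refine ⟨S0, T, ?_, ?_, ?_⟩
  · intro p hp; exact (Finset.mem_filter.1 hp).2.1
  · intro t ht hts0
    obtain ⟨ι, _, rfl⟩ := Finset.mem_image.1 ht
    exact (Finset.mem_filter.1 hts0).2.2 ι rfl
  · intro S hS0S hTS
    have hqS : ∀ ι, q ι ∉ S := fun ι => hTS _ (Finset.mem_image_of_mem q (Finset.mem_univ ι))
    have hcast : ∀ i j : V, ((f i : ℚ) - (f j : ℚ)) = (((f i : ℤ) - (f j : ℤ) : ℤ) : ℚ) := by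
      intro i j; push_cast; ring
    have factE : ∀ i j : V, G.Adj i j → SUnitQ S ((f i : ℚ) - (f j : ℚ)) := by
      intro i j hadj
      have hd0 : (f i : ℤ) - (f j : ℤ) ≠ 0 :=
        sub_ne_zero.2 fun h => hadj.ne (f_inj (by exact_mod_cast h))
      refine ⟨?_, ?_, ?_⟩
      · rw [hcast]; exact_mod_cast hd0
      · intro p hp hdvd
        rw [hcast, Rat.den_intCast] at hdvd
        exact absurd (Nat.dvd_one.1 hdvd) hp.ne_one
      · intro p hp hdvd
        rw [hcast, Rat.num_intCast] at hdvd
        have hpd : (p : ℤ) ∣ ((f i : ℤ) - (f j : ℤ)) :=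
          Int.dvd_natAbs.1 (Int.natCast_dvd_natCast.2 hdvd)
        apply hS0S
        refine Finset.mem_filter.2 ⟨?_, hp, ?_⟩
        · refine Finset.mem_range.2 (Nat.lt_succ_of_le ?_)
          have h1 : p ≤ ((f i : ℤ) - (f j : ℤ)).natAbs :=
            Nat.le_of_dvd (Int.natAbs_pos.2 hd0) hdvd
          have h2 : ((f i : ℤ) - (f j : ℤ)).natAbs ≤ N := by
            have := f_le i; have := f_le j; omega
          omega
        · intro ι hpq
          exact not_dvd ι i j (edge_r_ne i j hadj ι) (hpq ▸ hpd)
    have factNE : ∀ i j : V, i ≠ j → ¬ G.Adj i j → ¬ SUnitQ S ((f i : ℚ) - (f j : ℚ)) := by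
      intro i j hij hna
      obtain ⟨ι, hr⟩ : ∃ ι, r ι i = r ι j := by
        rcases lt_trichotomy (idx i) (idx j) with h | h | h
        · exact ⟨some (i, j), r_pair i j h hna⟩
        · exact absurd (idx_inj h) hij
        · exact ⟨some (j, i), (r_pair j i h fun ha => hna ha.symm).symm⟩
      intro hsu
      have hdvd := dvd_req ι i j hr
      apply hqS ι
      refine hsu.2.2 (q ι) (hq ι) ?_
      rw [hcast, Rat.num_intCast]
      have := Int.natAbs_dvd_natAbs.2 hdvd
      rwa [Int.natAbs_natCast] at this
    refine ⟨Finset.image (fun v => ((f v : ℚ))) Finset.univ, ?_, ?_⟩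
    · intro a ha p hp hdvd
      obtain ⟨v, _, rfl⟩ := Finset.mem_image.1 ha
      rw [Rat.den_natCast] at hdvd
      exact absurd (Nat.dvd_one.1 hdvd) hp.ne_one
    · have hmem : ∀ v : V, ((f v : ℚ)) ∈ Finset.image (fun v => ((f v : ℚ))) Finset.univ :=
        fun v => Finset.mem_image_of_mem _ (Finset.mem_univ v)
      let φfun : V → {x // x ∈ Finset.image (fun v => ((f v : ℚ))) Finset.univ} :=
        fun v => ⟨(f v : ℚ), hmem v⟩
      have hbij : Function.Bijective φfun := by
        constructor
        · intro a b h
          apply f_inj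
          have h' : ((f a : ℕ) : ℚ) = ((f b : ℕ) : ℚ) := congrArg Subtype.val h
          exact_mod_cast h'
        · rintro ⟨x, hx⟩
          obtain ⟨v, _, rfl⟩ := Finset.mem_image.1 hx
          exact ⟨v, rfl⟩
      refine ⟨⟨Equiv.ofBijective φfun hbij, ?_⟩⟩
      intro a b
      show (unitGraph S _).Adj (φfun a) (φfun b) ↔ G.Adj a b
      simp only [unitGraph, SimpleGraph.fromRel_adj]
      constructor
      · rintro ⟨hne, h | h⟩
        · by_contra hna
          have hab : a ≠ b := fun h' => hne (by rw [h'])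
          exact factNE a b hab hna h
        · by_contra hna
          have hab : a ≠ b := fun h' => hne (by rw [h'])
          exact factNE b a hab.symm (fun h' => hna h'.symm) h
      · intro hadj
        exact ⟨fun h => hadj.ne (hbij.1 h), Or.inl (factE a b hadj)⟩

end AuxStatement0

/-- For every finite simple graph `G` there exist infinitely many finite sets `S` of
primes such that `G` is representable with `S`. -/
theorem statement0 {V : Type} [Fintype V] (G : SimpleGraph V) :
    {S : Finset ℕ | (∀ p ∈ S, p.Prime) ∧ Representable S G}.Infinite := by
  classical
  obtain ⟨S0, T, hS0prime, hTS0, hkey⟩ := aux_exists_S0 G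
  have hPinf : ({p : ℕ | p.Prime} \ ((S0 : Set ℕ) ∪ (T : Set ℕ))).Infinite :=
    Nat.infinite_setOf_prime.diff ((S0.finite_toSet).union (T.finite_toSet))
  have himg : ((fun p => insert p S0) ''
      ({p : ℕ | p.Prime} \ ((S0 : Set ℕ) ∪ (T : Set ℕ)))).Infinite := by
    refine Set.Infinite.image ?_ hPinf
    intro p hp p' hp' h
    have h2 : insert p S0 = insert p' S0 := h
    have hmem : p ∈ insert p' S0 := h2 ▸ Finset.mem_insert_self p S0
    rcases Finset.mem_insert.1 hmem with h1 | h1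
    · exact h1
    · exact absurd (Or.inl (Finset.mem_coe.2 h1)) hp.2
  refine himg.mono ?_
  rintro S ⟨p, hp, rfl⟩
  have hpP : p.Prime := hp.1
  have hpn : ¬ (p ∈ (S0 : Set ℕ) ∨ p ∈ (T : Set ℕ)) := hp.2
  constructor
  · intro x hx
    rcases Finset.mem_insert.1 hx with h | h
    · exact h ▸ hpP
    · exact hS0prime x h
  · refine hkey _ (Finset.subset_insert p S0) ?_
    intro t ht hmem
    rcases Finset.mem_insert.1 hmem with h | h
    · exact hpn (Or.inr (Finset.mem_coe.2 (h ▸ ht)))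
    · exact hTS0 t ht h
end

section
/- Let S be any fixed finite set of rational primes, and let G be a finite simple graph such that every connected component of G is representable with S. Then G is representable with S. -/
open SimpleGraph

/-- S-smooth nonzero integers -/
def Sm (S : Finset ℕ) (m : ℤ) : Prop :=
  m ≠ 0 ∧ ∀ p : ℕ, p.Prime → (p : ℤ) ∣ m → p ∈ S

lemma Sm.mul {S : Finset ℕ} {m n : ℤ} (hm : Sm S m) (hn : Sm S n) : Sm S (m * n) :=
  ⟨mul_ne_zero hm.1 hn.1, fun p pp hd => by
    rcases (Int.Prime.dvd_mul' pp hd) with h | h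
    · exact hm.2 p pp h
    · exact hn.2 p pp h⟩

lemma sm_one {S : Finset ℕ} : Sm S 1 := by
  refine ⟨one_ne_zero, fun p pp hd => absurd pp.one_lt ?_⟩
  have h1 : (p : ℤ) ≤ 1 := Int.le_of_dvd one_pos hd
  have h2 : p ≤ 1 := by exact_mod_cast h1
  omega

lemma rat_den_cast_ne {q : ℚ} : ((q.den : ℚ)) ≠ 0 := Nat.cast_ne_zero.mpr q.den_nz

lemma mul_den_eq (q : ℚ) : q * (q.den : ℚ) = (q.num : ℚ) := by
  have h := Rat.num_div_den q
  rw [div_eq_iff rat_den_cast_ne] at h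
  exact h.symm

lemma sunit_of_div {S : Finset ℕ} {m n : ℤ} (hm : Sm S m) (hn : Sm S n) :
    SUnitQ S ((m : ℚ) / n) := by
  have hm0 : (m : ℚ) ≠ 0 := Int.cast_ne_zero.mpr hm.1
  have hn0 : (n : ℚ) ≠ 0 := Int.cast_ne_zero.mpr hn.1
  have hq : (m : ℚ) / n = Rat.divInt m n := (Rat.divInt_eq_div m n).symm
  refine ⟨div_ne_zero hm0 hn0, ?_, ?_⟩
  · intro p pp hd
    have hdvd : ((Rat.divInt m n).den : ℤ) ∣ n := Rat.den_dvd m n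
    refine hn.2 p pp ?_
    have h1 : (p : ℤ) ∣ (((m : ℚ) / n).den : ℤ) := Int.natCast_dvd_natCast.mpr hd
    rw [hq] at h1
    exact h1.trans hdvd
  · intro p pp hd
    have hdvd : (Rat.divInt m n).num ∣ m := Rat.num_dvd m hn.1
    refine hm.2 p pp ?_
    have h1 : (p : ℤ) ∣ ((m : ℚ) / n).num := by
      have := Int.natAbs_dvd_natAbs.mp (by simpa using hd : (p : ℤ).natAbs ∣ ((m:ℚ)/n).num.natAbs)
      exact this
    rw [hq] at h1
    exact h1.trans hdvd

lemma SUnitQ.num_sm {S : Finset ℕ} {q : ℚ} (h : SUnitQ S q) : Sm S q.num :=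
  ⟨Rat.num_ne_zero.mpr h.1, fun p pp hd => h.2.2 p pp (by
    have := Int.natAbs_dvd_natAbs.mpr hd
    simpa using this)⟩

lemma SUnitQ.den_sm {S : Finset ℕ} {q : ℚ} (h : SUnitQ S q) : Sm S (q.den : ℤ) :=
  ⟨Int.natCast_ne_zero.mpr q.den_nz, fun p pp hd => h.2.1 p pp (Int.natCast_dvd_natCast.mp hd)⟩

lemma SUnitQ.mul {S : Finset ℕ} {q r : ℚ} (hq : SUnitQ S q) (hr : SUnitQ S r) :
    SUnitQ S (q * r) := by
  have key : q * r = ((q.num * r.num : ℤ) : ℚ) / ((q.den * r.den : ℕ) : ℚ) := by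
    rw [eq_div_iff (by push_cast; exact mul_ne_zero rat_den_cast_ne rat_den_cast_ne)]
    push_cast
    calc q * r * ((q.den : ℚ) * (r.den : ℚ)) = (q * q.den) * (r * r.den) := by ring
    _ = (q.num : ℚ) * (r.num : ℚ) := by rw [mul_den_eq, mul_den_eq]
  rw [key]
  have := sunit_of_div (S := S) (hq.num_sm.mul hr.num_sm) (hq.den_sm.mul hr.den_sm)
  convert this using 2 <;> push_cast <;> ring

lemma SUnitQ.inv {S : Finset ℕ} {q : ℚ} (hq : SUnitQ S q) : SUnitQ S q⁻¹ := by
  have hq0 : q ≠ 0 := hq.1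
  have hnum0 : (q.num : ℚ) ≠ 0 := Int.cast_ne_zero.mpr (Rat.num_ne_zero.mpr hq0)
  have key : q⁻¹ = ((q.den : ℤ) : ℚ) / ((q.num : ℤ) : ℚ) := by
    rw [eq_div_iff hnum0, inv_mul_eq_iff_eq_mul₀ hq0]
    push_cast
    exact (mul_den_eq q).symm
  rw [key]
  exact sunit_of_div hq.den_sm hq.num_sm

lemma sunit_intCast {S : Finset ℕ} {m : ℤ} (hm : Sm S m) : SUnitQ S (m : ℚ) := by
  have := sunit_of_div hm (sm_one (S := S))
  simpa using this

lemma sunit_mul_iff {S : Finset ℕ} {u : ℚ} (hu : SUnitQ S u) (z : ℚ) :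
    SUnitQ S (u * z) ↔ SUnitQ S z := by
  constructor
  · intro h
    have := hu.inv.mul h
    rwa [inv_mul_cancel_left₀ hu.1] at this
  · exact fun h => hu.mul h

lemma sunit_neg_iff {S : Finset ℕ} (z : ℚ) : SUnitQ S (-z) ↔ SUnitQ S z := by
  have key : ∀ w : ℚ, SUnitQ S w → SUnitQ S (-w) := by
    rintro w ⟨h0, hd, hn⟩
    refine ⟨neg_ne_zero.mpr h0, ?_, ?_⟩
    · simpa [Rat.den_neg_eq_den] using hd
    · simpa [Rat.num_neg_eq_neg_num, Int.natAbs_neg] using hn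
  exact ⟨fun h => by simpa using key _ h, key z⟩

/-- an integer divisible by a prime outside S is not an S-unit -/
lemma not_sunit_of_dvd {S : Finset ℕ} {d : ℤ} {q : ℕ} (hq : q.Prime) (hqS : q ∉ S)
    (hd : (q : ℤ) ∣ d) : ¬ SUnitQ S (d : ℚ) := by
  rintro ⟨h0, hden, hnum⟩
  apply hqS
  apply hnum q hq
  rw [Rat.num_intCast]
  have := Int.natAbs_dvd_natAbs.mpr hd
  simpa using this

/-- CRT for a finite family of pairwise coprime moduli -/
lemma crt_finset {ι : Type*} (s : Finset ι) (m : ι → ℕ) (r : ι → ℤ)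
    (hcop : ∀ i ∈ s, ∀ j ∈ s, i ≠ j → Nat.Coprime (m i) (m j)) :
    ∃ t : ℤ, ∀ i ∈ s, (m i : ℤ) ∣ (t - r i) := by
  classical
  induction s using Finset.induction_on with
  | empty => exact ⟨0, by simp⟩
  | @insert a s ha ih =>
    obtain ⟨t, ht⟩ := ih (fun i hi j hj hij => hcop i (Finset.mem_insert_of_mem hi) j
      (Finset.mem_insert_of_mem hj) hij)
    set P : ℕ := ∏ i ∈ s, m i with hP
    have hcopP : Nat.Coprime (m a) P := by
      apply Nat.Coprime.prod_right
      intro i hi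
      exact hcop a (Finset.mem_insert_self a s) i (Finset.mem_insert_of_mem hi)
        (fun h => ha (h ▸ hi))
    obtain ⟨u, v, huv⟩ := Nat.Coprime.isCoprime hcopP
    refine ⟨t + (P : ℤ) * (v * (r a - t)), ?_⟩
    intro i hi
    rcases Finset.mem_insert.mp hi with rfl | hi
    · have key : t + (P : ℤ) * (v * (r i - t)) - r i
          = -((u * (r i - t)) * (m i : ℤ)) := by
        have h1 : u * (m i : ℤ) * (r i - t) + v * (P : ℤ) * (r i - t) = r i - t := by
          rw [← add_mul, huv, one_mul]
        linarith [h1]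
      rw [key]
      exact ⟨-(u * (r i - t)), by ring⟩
    · have h1 : (m i : ℤ) ∣ t - r i := ht i hi
      have h2 : (m i : ℤ) ∣ (P : ℤ) := Int.natCast_dvd_natCast.mpr (Finset.dvd_prod_of_mem m hi)
      have key : t + (P : ℤ) * (v * (r a - t)) - r i
          = (t - r i) + (P : ℤ) * (v * (r a - t)) := by ring
      rw [key]
      exact dvd_add h1 (h2.mul_right _)

/-- distinct primes outside S indexed by a fintype -/
lemma exists_primes (α : Type*) [Fintype α] (S : Finset ℕ) :
    ∃ q : α → ℕ, Function.Injective q ∧ ∀ a, (q a).Prime ∧ q a ∉ S := by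
  classical
  set B := S.sup id with hB
  set ι := Fintype.equivFin α with hι
  refine ⟨fun a => Nat.nth Nat.Prime ((ι a : ℕ) + B + 1), ?_, ?_⟩
  · intro a b hab
    have hinj := Nat.nth_injective Nat.infinite_setOf_prime hab
    have : (ι a : ℕ) = (ι b : ℕ) := by omega
    exact ι.injective (Fin.ext this)
  · intro a
    refine ⟨Nat.nth_mem_of_infinite Nat.infinite_setOf_prime _, ?_⟩
    intro hmem
    have h1 : (ι a : ℕ) + B + 1 ≤ Nat.nth Nat.Prime ((ι a : ℕ) + B + 1) :=
      (Nat.nth_strictMono Nat.infinite_setOf_prime).le_apply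
    have h2 : Nat.nth Nat.Prime ((ι a : ℕ) + B + 1) ≤ B := Finset.le_sup (f := id) hmem
    omega

/-- If every connected component of `G` is representable with `S`, then so is `G`. -/
theorem statement4 (S : Finset ℕ) (hS : ∀ p ∈ S, p.Prime)
    {V : Type} [Fintype V] (G : SimpleGraph V)
    (h : ∀ c : G.ConnectedComponent, Representable S (G.induce c.supp)) :
    Representable S G := by
  classical
  choose A hA using h
  have hint : ∀ c, ∀ a ∈ A c, SInteger S a := fun c => (hA c).1
  have e : ∀ c, (G.induce c.supp) ≃g unitGraph S (A c) := fun c => (hA c).2.some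
  set y : (c : G.ConnectedComponent) → (v : V) → v ∈ c.supp → ℚ :=
    fun c v hv => (((e c) ⟨v, hv⟩ : (A c)) : ℚ) with hy
  have hyA : ∀ c v hv, y c v hv ∈ A c := fun c v hv => ((e c) ⟨v, hv⟩).2
  have hymem : ∀ v : V, v ∈ (G.connectedComponentMk v).supp := fun v => rfl
  set x : V → ℚ := fun v => y (G.connectedComponentMk v) v (hymem v) with hx
  have ycongr : ∀ (c : G.ConnectedComponent) (v : V) (hv : v ∈ c.supp),
      y c v hv = x v := by
    intro c v hv
    have hcv : G.connectedComponentMk v = c := hv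
    subst hcv
    rfl
  set D : ℕ := ∏ v : V, (x v).den with hD
  have hDpos : 0 < D := Finset.prod_pos (fun v _ => (x v).pos)
  have hSintx : ∀ v, SInteger S (x v) := fun v => hint _ _ (hyA _ _ _)
  have hDsm : Sm S (D : ℤ) := by
    refine ⟨by exact_mod_cast hDpos.ne', ?_⟩
    intro p pp hd
    have hdN : p ∣ D := Int.natCast_dvd_natCast.mp hd
    rw [hD] at hdN
    obtain ⟨v, _, hv⟩ := (pp.prime.dvd_finset_prod_iff _).mp hdN
    exact hSintx v p pp hv
  have hXex : ∀ v, ∃ m : ℤ, (m : ℚ) = x v * D := by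
    intro v
    have hdvd : (x v).den ∣ D := Finset.dvd_prod_of_mem _ (Finset.mem_univ v)
    obtain ⟨k, hk⟩ := hdvd
    refine ⟨(x v).num * k, ?_⟩
    push_cast
    rw [hk]
    push_cast
    rw [← mul_assoc, mul_den_eq]
  choose X hX using hXex
  obtain ⟨qp, hqpinj, hqp⟩ := exists_primes (V × V) S
  have htex : ∀ c : G.ConnectedComponent, ∃ t : ℤ,
      ∀ p ∈ Finset.univ.filter (fun p : V × V =>
        G.connectedComponentMk p.1 ≠ G.connectedComponentMk p.2 ∧
        (G.connectedComponentMk p.1 = c ∨ G.connectedComponentMk p.2 = c)),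
        (((qp p)^2 : ℕ) : ℤ) ∣ t - (if G.connectedComponentMk p.1 = c then -X p.1
          else -X p.2 + qp p) := by
    intro c
    apply crt_finset
    intro i _ j _ hij
    exact Nat.Coprime.pow 2 2 ((Nat.coprime_primes (hqp i).1 (hqp j).1).mpr
      (fun hh => hij (hqpinj hh)))
  choose t ht using htex
  set f : V → ℚ := fun v => ((X v + t (G.connectedComponentMk v) : ℤ) : ℚ) with hf
  have hcross : ∀ v w : V, G.connectedComponentMk v ≠ G.connectedComponentMk w →
      (qp (v, w) : ℤ) ∣ ((X v + t (G.connectedComponentMk v))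
        - (X w + t (G.connectedComponentMk w)))
      ∧ ((X v + t (G.connectedComponentMk v)) - (X w + t (G.connectedComponentMk w))) ≠ 0 := by
    intro v w hvw
    have h1 := ht (G.connectedComponentMk v) (v, w)
      (Finset.mem_filter.mpr ⟨Finset.mem_univ _, hvw, Or.inl rfl⟩)
    rw [if_pos rfl] at h1
    have h2 := ht (G.connectedComponentMk w) (v, w)
      (Finset.mem_filter.mpr ⟨Finset.mem_univ _, hvw, Or.inr rfl⟩)
    rw [if_neg hvw] at h2
    have h1' : ((qp (v, w) : ℤ))^2 ∣ t (G.connectedComponentMk v) - (-X v) := by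
      have : (((qp (v, w))^2 : ℕ) : ℤ) = ((qp (v, w) : ℤ))^2 := by push_cast; ring
      rw [this] at h1
      exact h1
    have h2' : ((qp (v, w) : ℤ))^2 ∣ t (G.connectedComponentMk w)
        - (-X w + (qp (v, w) : ℤ)) := by
      have : (((qp (v, w))^2 : ℕ) : ℤ) = ((qp (v, w) : ℤ))^2 := by push_cast; ring
      rw [this] at h2
      exact h2
    have hQQ : (qp (v, w) : ℤ) ∣ ((qp (v, w) : ℤ))^2 := dvd_pow_self _ (by norm_num)
    have hQpos : (2 : ℤ) ≤ (qp (v, w) : ℤ) := by exact_mod_cast (hqp (v, w)).1.two_le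
    constructor
    · have ha : (qp (v, w) : ℤ) ∣ t (G.connectedComponentMk v) - (-X v) := hQQ.trans h1'
      have hb : (qp (v, w) : ℤ) ∣ t (G.connectedComponentMk w) - (-X w + (qp (v, w) : ℤ)) :=
        hQQ.trans h2'
      have key : (X v + t (G.connectedComponentMk v)) - (X w + t (G.connectedComponentMk w))
          = (t (G.connectedComponentMk v) - (-X v))
            - (t (G.connectedComponentMk w) - (-X w + (qp (v, w) : ℤ))) - (qp (v, w) : ℤ) := by
        ring
      rw [key]
      exact dvd_sub (dvd_sub ha hb) dvd_rfl
    · intro h0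
      have hQdvd : ((qp (v, w) : ℤ))^2 ∣ (qp (v, w) : ℤ) := by
        have key : (qp (v, w) : ℤ) = (t (G.connectedComponentMk v) - (-X v))
            - (t (G.connectedComponentMk w) - (-X w + (qp (v, w) : ℤ))) := by linarith [h0]
        have hdd := dvd_sub h1' h2'
        rwa [← key] at hdd
      have := Int.le_of_dvd (by linarith) hQdvd
      nlinarith
  have hfinj : Function.Injective f := by
    intro v w hfeq
    simp only [hf] at hfeq
    by_cases hvw : G.connectedComponentMk v = G.connectedComponentMk w
    · have hint' : (X v + t (G.connectedComponentMk v) : ℤ)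
          = X w + t (G.connectedComponentMk w) := by exact_mod_cast hfeq
      rw [hvw] at hint'
      have hXvw : X v = X w := by omega
      have hxvw : x v = x w := by
        have h1 : (X v : ℚ) = (X w : ℚ) := by exact_mod_cast hXvw
        rw [hX v, hX w] at h1
        exact mul_right_cancel₀ (by exact_mod_cast hDpos.ne' : (D : ℚ) ≠ 0) h1
      have hwmem : w ∈ (G.connectedComponentMk v).supp := hvw.symm
      have hyeq : y (G.connectedComponentMk v) v (hymem v)
          = y (G.connectedComponentMk v) w hwmem := by
        rw [ycongr _ w hwmem]
        exact hxvw
      have h2 := (e (G.connectedComponentMk v)).toEquiv.injective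
        (Subtype.coe_injective hyeq)
      exact Subtype.mk_eq_mk.mp h2
    · exfalso
      apply (hcross v w hvw).2
      have h3 : (X v + t (G.connectedComponentMk v) : ℤ)
          = X w + t (G.connectedComponentMk w) := by exact_mod_cast hfeq
      omega
  set A' : Finset ℚ := Finset.image f Finset.univ with hA'
  have hmem' : ∀ v, f v ∈ A' := fun v => Finset.mem_image_of_mem f (Finset.mem_univ v)
  set g : V → A' := fun v => ⟨f v, hmem' v⟩ with hg
  have hgbij : Function.Bijective g := by
    constructor
    · intro v w hh
      exact hfinj (congrArg Subtype.val hh)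
    · rintro ⟨a, ha⟩
      obtain ⟨v, _, hv⟩ := Finset.mem_image.mp ha
      exact ⟨v, Subtype.ext hv⟩
  refine ⟨A', ?_, ⟨⟨Equiv.ofBijective g hgbij, @fun a b => ?_⟩⟩⟩
  · intro a ha
    obtain ⟨v, _, rfl⟩ := Finset.mem_image.mp ha
    intro p pp hd
    simp only [hf, Rat.den_intCast] at hd
    exact absurd (Nat.dvd_one.mp hd) pp.ne_one
  · by_cases hvw : G.connectedComponentMk a = G.connectedComponentMk b
    · -- same component
      show ((g a ≠ g b) ∧ (SUnitQ S (f a - f b) ∨ SUnitQ S (f b - f a))) ↔ G.Adj a b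
      have hbm : b ∈ (G.connectedComponentMk a).supp := hvw.symm
      have ham : a ∈ (G.connectedComponentMk a).supp := hymem a
      have hfd : f a - f b = (D : ℚ) * (x a - x b) := by
        simp only [hf]
        rw [hvw]
        push_cast
        rw [hX a, hX b]
        ring
      have hfd' : f b - f a = (D : ℚ) * (x b - x a) := by
        have hh : f b - f a = -(f a - f b) := by ring
        rw [hh, hfd]; ring
      have hDQ : SUnitQ S ((D : ℚ)) := by
        have hh := sunit_intCast (S := S) hDsm
        push_cast at hh
        exact hh
      have hD0 : (D : ℚ) ≠ 0 := Nat.cast_ne_zero.mpr hDpos.ne'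
      have hne : (g a = g b) ↔ x a = x b := by
        rw [Subtype.ext_iff]
        show f a = f b ↔ _
        constructor
        · intro hh
          have h0 : (D : ℚ) * (x a - x b) = 0 := by rw [← hfd, hh]; ring
          rcases mul_eq_zero.mp h0 with h' | h'
          · exact absurd h' hD0
          · exact sub_eq_zero.mp h'
        · intro hh
          have hz : f a - f b = 0 := by rw [hfd, hh]; ring
          exact sub_eq_zero.mp hz
      have hGadj : G.Adj a b ↔ (x a ≠ x b ∧ (SUnitQ S (x a - x b) ∨ SUnitQ S (x b - x a))) := by
        have h2 : G.Adj a b ↔ (unitGraph S (A (G.connectedComponentMk a))).Adj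
            (e (G.connectedComponentMk a) ⟨a, ham⟩) (e (G.connectedComponentMk a) ⟨b, hbm⟩) :=
          ((e (G.connectedComponentMk a)).map_rel_iff (a := ⟨a, ham⟩) (b := ⟨b, hbm⟩)).symm
        rw [h2]
        have hxa : ((e (G.connectedComponentMk a) ⟨a, ham⟩ : _) : ℚ) = x a := ycongr _ a ham
        have hxb : ((e (G.connectedComponentMk a) ⟨b, hbm⟩ : _) : ℚ) = x b := ycongr _ b hbm
        show ((e (G.connectedComponentMk a) ⟨a, ham⟩ ≠ e (G.connectedComponentMk a) ⟨b, hbm⟩)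
          ∧ (SUnitQ S (((e (G.connectedComponentMk a) ⟨a, ham⟩ : _) : ℚ)
              - ((e (G.connectedComponentMk a) ⟨b, hbm⟩ : _) : ℚ))
            ∨ SUnitQ S (((e (G.connectedComponentMk a) ⟨b, hbm⟩ : _) : ℚ)
              - ((e (G.connectedComponentMk a) ⟨a, ham⟩ : _) : ℚ)))) ↔ _
        apply and_congr
        · rw [ne_eq, ne_eq, ← Subtype.coe_inj, hxa, hxb]
        · rw [hxa, hxb]
      rw [hGadj]
      apply and_congr
      · rw [ne_eq, ne_eq, hne]
      · rw [hfd, hfd', sunit_mul_iff hDQ, sunit_mul_iff hDQ]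
    · -- different components
      show ((g a ≠ g b) ∧ (SUnitQ S (f a - f b) ∨ SUnitQ S (f b - f a))) ↔ G.Adj a b
      obtain ⟨hdvd, hne0⟩ := hcross a b hvw
      constructor
      · rintro ⟨hneq, hor⟩
        exfalso
        have hfd : f a - f b = (((X a + t (G.connectedComponentMk a))
            - (X b + t (G.connectedComponentMk b)) : ℤ) : ℚ) := by
          simp only [hf]; push_cast; ring
        rcases hor with hu | hu
        · exact not_sunit_of_dvd (hqp (a, b)).1 (hqp (a, b)).2 hdvd
            (by rw [← hfd]; exact hu)
        · refine not_sunit_of_dvd (hqp (a, b)).1 (hqp (a, b)).2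
            (dvd_neg.mpr hdvd) ?_
          have hfd' : f b - f a = ((-((X a + t (G.connectedComponentMk a))
              - (X b + t (G.connectedComponentMk b))) : ℤ) : ℚ) := by
            simp only [hf]; push_cast; ring
          rw [← hfd']
          exact hu
      · intro hadj
        exact absurd (SimpleGraph.ConnectedComponent.connectedComponentMk_eq_of_adj hadj) hvw
end
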